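/- arXiv:2311.18354 — 4 statements merged into one kernel-verified Lean document; each statement's English description precedes it below -/
import Mathlib

section
/- Let Λ be an O_F-lattice in a symplectic F-space (V, φ), and let Stab(Λ) denote the subgroup of GSp_{F₀}(V, φ)(F₀) consisting of elements g with gΛ = Λ. Then the similitude character c maps Stab(Λ) onto O_{F₀}^×: for every t ∈ O_{F₀}^× there exists an F-linear automorphism g of V with gΛ = Λ and φ(gx, gy) = t·φ(x, y) for all x, y ∈ V. -/
/-!
Over the valuation ring `O`, pick `e, f ∈ Λ` such that `φ e f` divides every value of `φ` on
`Λ × Λ`. If `φ e f = 0` then `Λ = 0`; otherwise `Λ = O e + O f + Λ'` with `Λ'` the part of `Λ`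
orthogonal to `e` and `f`, and induction on `dim (F Λ')` shows that `Λ` is generated by two
totally isotropic subsets `s₁, s₂`. Their `F`-spans are complementary Lagrangians, and the
projection `p` onto the first along the second maps `Λ` into `O s₁ ⊆ Λ`. Hence `1 + (t - 1) p`,
which is `t` on one Lagrangian and the identity on the other, multiplies `φ` by `t` and, since
`t` and `t⁻¹` are integral, stabilizes `Λ`.
-/

open Submodule Module

namespace IsIdempotentElem

variable {K : Type*} [CommRing K]

theorem one_add_smul_mul_one_add_smul {A : Type*} [Ring A] [Algebra K A] {e : A}
    (he : IsIdempotentElem e) (a b : K) :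
    (1 + a • e) * (1 + b • e) = 1 + (a + b + a * b) • e := by
  rw [add_mul, one_mul, mul_add, mul_one, smul_mul_smul, he.eq]
  module

theorem one_add_units_sub_one_smul_mul_inv {A : Type*} [Ring A] [Algebra K A] {e : A}
    (he : IsIdempotentElem e) (u : Kˣ) :
    (1 + ((u : K) - 1) • e) * (1 + ((↑u⁻¹ : K) - 1) • e) = 1 := by
  rw [he.one_add_smul_mul_one_add_smul, show (u : K) - 1 + (↑u⁻¹ - 1) + (u - 1) * (↑u⁻¹ - 1) =
    u * ↑u⁻¹ - 1 by ring, Units.mul_inv, sub_self, zero_smul, add_zero]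

variable {V : Type*} [AddCommGroup V] [Module K V] {p : Module.End K V}

def dilation (hp : IsIdempotentElem p) (u : Kˣ) : V ≃ₗ[K] V :=
  .ofLinearMap (1 + ((u : K) - 1) • p) (1 + ((↑u⁻¹ : K) - 1) • p)
    (hp.one_add_units_sub_one_smul_mul_inv u) (by
      have h := hp.one_add_units_sub_one_smul_mul_inv u⁻¹
      rwa [inv_inv] at h)

theorem dilation_apply (hp : IsIdempotentElem p) (u : Kˣ) (x : V) :
    hp.dilation u x = x + ((u : K) - 1) • p x := rfl

theorem dilation_symm (hp : IsIdempotentElem p) (u : Kˣ) :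
    (hp.dilation u).symm = hp.dilation u⁻¹ := rfl

theorem dilation_mem_iff {R : Type*} [CommRing R] [Algebra R K] [Module R V]
    [IsScalarTower R K V]
    (hp : IsIdempotentElem p) {Λ : Submodule R V} (hpΛ : ∀ x ∈ Λ, p x ∈ Λ) (u : Rˣ)
    {x : V} :
    hp.dilation (Units.map (algebraMap R K) u) x ∈ Λ ↔ x ∈ Λ := by
  have hmaps (v : Rˣ) {y : V} (hy : y ∈ Λ) : hp.dilation (Units.map (algebraMap R K) v) y ∈ Λ := by
    rw [dilation_apply, Units.coe_map, MonoidHom.coe_coe, ← map_one (algebraMap R K), ← map_sub,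
      algebraMap_smul]
    exact Λ.add_mem hy (Λ.smul_mem _ (hpΛ y hy))
  refine ⟨fun h => ?_, hmaps u⟩
  simpa [map_inv, ← dilation_symm] using hmaps u⁻¹ h

theorem apply_dilation_dilation (hp : IsIdempotentElem p) {φ : V →ₗ[K] V →ₗ[K] K}
    (hrange : ∀ x y, φ (p x) (p y) = 0) (hker : ∀ x y, φ (x - p x) (y - p y) = 0)
    (u : Kˣ) (x y : V) : φ (hp.dilation u x) (hp.dilation u y) = u * φ x y := by
  have hscale (a b c d : V) (hac : φ a c = 0) (hbd : φ b d = 0) :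
      φ ((u : K) • a + b) ((u : K) • c + d) = u * φ (a + b) (c + d) := by
    simp only [map_add, map_smul, LinearMap.add_apply, LinearMap.smul_apply, smul_eq_mul, hac, hbd]
    ring
  have hsplit (z : V) : hp.dilation u z = (u : K) • p z + (z - p z) := by
    rw [dilation_apply]; module
  rw [hsplit, hsplit, hscale _ _ _ _ (hrange x y) (hker x y), add_sub_cancel, add_sub_cancel]

end IsIdempotentElem

section Isotropic

variable {F V : Type*} [CommRing F] [AddCommGroup V] [Module F V]

def IsTotallyIsotropic (φ : V →ₗ[F] V →ₗ[F] F) (s : Set V) : Prop :=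
  ∀ x ∈ s, ∀ y ∈ s, φ x y = 0

def IsNondegenerateOn (φ : V →ₗ[F] V →ₗ[F] F) (W : Submodule F V) : Prop :=
  ∀ x ∈ W, (∀ y ∈ W, φ x y = 0) → x = 0

variable {φ : V →ₗ[F] V →ₗ[F] F} {s : Set V}

theorem IsTotallyIsotropic.span (h : IsTotallyIsotropic φ s) :
    IsTotallyIsotropic φ (Submodule.span F s) := by
  intro x hx y hy
  have hle : map₂ φ (Submodule.span F s) (Submodule.span F s) ≤ ⊥ := by
    rw [map₂_span_span, span_le]
    rintro _ ⟨a, ha, b, hb, rfl⟩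
    exact h a ha b hb
  exact hle (apply_mem_map₂ _ hx hy)

theorem IsTotallyIsotropic.insert (halt : φ.IsAlt) (h : IsTotallyIsotropic φ s) {e : V}
    (he : ∀ x ∈ s, φ e x = 0) : IsTotallyIsotropic φ (insert e s) := by
  rintro x (rfl | hx) y (rfl | hy)
  exacts [halt _, he y hy, halt.eq_iff.mp (he x hx), h x hx y hy]

theorem isCompl_of_isTotallyIsotropic (hφ : φ.SeparatingLeft) {W₁ W₂ : Submodule F V}
    (h₁ : IsTotallyIsotropic φ W₁) (h₂ : IsTotallyIsotropic φ W₂) (hsup : W₁ ⊔ W₂ = ⊤) :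
    IsCompl W₁ W₂ := by
  refine ⟨disjoint_def.mpr fun x hx₁ hx₂ => hφ x fun y => ?_, codisjoint_iff.mpr hsup⟩
  obtain ⟨y₁, hy₁, y₂, hy₂, rfl⟩ := mem_sup.mp (hsup ▸ mem_top : y ∈ W₁ ⊔ W₂)
  rw [map_add, h₁ x hx₁ y₁ hy₁, h₂ x hx₂ y₂ hy₂, add_zero]

end Isotropic

theorem Submodule.projection_mem_span_of_isCompl_span {R F V : Type*} [CommRing R] [CommRing F]
    [Algebra R F] [AddCommGroup V] [Module F V] [Module R V] [IsScalarTower R F V] {s t : Set V}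
    (hst : IsCompl (span F s) (span F t)) {x : V} (hx : x ∈ span R (s ∪ t)) :
    (span F s).projection (span F t) hst x ∈ span R s := by
  have hle : (span R (s ∪ t)).map (((span F s).projection (span F t) hst).restrictScalars R) ≤
      span R s := by
    rw [map_span, span_le]
    rintro _ ⟨y, hy | hy, rfl⟩
    · rw [LinearMap.restrictScalars_apply, (projection_eq_self_iff hst y).mpr (subset_span hy)]
      exact subset_span hy
    · rw [LinearMap.restrictScalars_apply, projection_apply_of_mem_right hst (subset_span hy)]
      exact zero_mem _
  exact hle (mem_map_of_mem hx)

section Lattice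

variable {O F V : Type*} [CommRing O] [Field F] [Algebra O F]
  [AddCommGroup V] [Module F V] [Module O V] [IsScalarTower O F V]
  {φ : V →ₗ[F] V →ₗ[F] F} {Λ : Submodule O V}

theorem exists_mem_forall_apply_mem_span_singleton [IsDomain O] [ValuationRing O]
    [IsFractionRing O F] (hΛ : Λ.FG) :
    ∃ e ∈ Λ, ∃ f ∈ Λ, ∀ x ∈ Λ, ∀ y ∈ Λ, φ x y ∈ O ∙ φ e f := by
  obtain ⟨S, rfl⟩ := hΛ
  rcases S.eq_empty_or_nonempty with rfl | hS
  · exact ⟨0, zero_mem _, 0, zero_mem _, by simp⟩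
  obtain ⟨⟨e, f⟩, hef, hmax⟩ :=
    (S ×ˢ S).exists_max_image (fun p => ValuationRing.valuation O F (φ p.1 p.2)) (hS.product hS)
  obtain ⟨he, hf⟩ := Finset.mem_product.mp hef
  refine ⟨e, subset_span he, f, subset_span hf, fun x hx y hy => ?_⟩
  have hle : map₂ (φ.restrictScalars₁₂ O O) (span O S) (span O S) ≤ O ∙ φ e f := by
    rw [map₂_span_span, span_le]
    rintro _ ⟨a, ha, b, hb, rfl⟩
    obtain ⟨r, hr⟩ := hmax (a, b) (Finset.mem_product.mpr ⟨ha, hb⟩)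
    exact mem_span_singleton.mpr ⟨r, hr⟩
  exact hle (apply_mem_map₂ _ hx hy)

variable {e f : V}

variable (φ Λ e f) in
def pairOrthogonal : Submodule O V :=
  Λ ⊓ (LinearMap.ker (φ e) ⊓ LinearMap.ker (φ.flip f)).restrictScalars O

theorem pairOrthogonal_le : pairOrthogonal φ Λ e f ≤ Λ := inf_le_left

theorem span_pairOrthogonal_le :
    span F (pairOrthogonal φ Λ e f : Set V) ≤ LinearMap.ker (φ e) ⊓ LinearMap.ker (φ.flip f) :=
  span_le.mpr fun _ hx => hx.2

theorem exists_sub_smul_sub_smul_mem_pairOrthogonal (halt : φ.IsAlt)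
    (hdvd : ∀ x ∈ Λ, ∀ y ∈ Λ, φ x y ∈ O ∙ φ e f) (he : e ∈ Λ) (hf : f ∈ Λ) {z : V} (hz : z ∈ Λ) :
    ∃ a b : O, z - a • e - b • f ∈ pairOrthogonal φ Λ e f := by
  obtain ⟨a, ha⟩ := mem_span_singleton.mp (hdvd z hz f hf)
  obtain ⟨b, hb⟩ := mem_span_singleton.mp (hdvd e he z hz)
  refine ⟨a, b, sub_mem (sub_mem hz (Λ.smul_mem a he)) (Λ.smul_mem b hf), ?_, ?_⟩
  · simp [LinearMap.map_smul_of_tower, halt e, hb]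
  · simp [LinearMap.map_smul_of_tower, halt f, ha]

theorem span_pairOrthogonal_lt (he : e ∈ Λ) (hef : φ e f ≠ 0) :
    span F (pairOrthogonal φ Λ e f : Set V) < span F Λ :=
  SetLike.lt_iff_le_and_exists.mpr ⟨span_mono pairOrthogonal_le, e, subset_span he,
    fun h => hef (span_pairOrthogonal_le h).2⟩

theorem IsNondegenerateOn.span_pairOrthogonal (halt : φ.IsAlt)
    (hnd : IsNondegenerateOn φ (span F Λ))
    (hsplit : ∀ z ∈ Λ, ∃ a b : O, z - a • e - b • f ∈ pairOrthogonal φ Λ e f) :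
    IsNondegenerateOn φ (span F (pairOrthogonal φ Λ e f)) := by
  intro x hx hx0
  have hxe : φ x e = 0 := halt.eq_iff.mp (span_pairOrthogonal_le hx).1
  have hxf : φ x f = 0 := (span_pairOrthogonal_le hx).2
  refine hnd x (span_mono pairOrthogonal_le hx) fun y hy =>
    (span_le (p := LinearMap.ker (φ x))).mpr (fun z hz => ?_) hy
  obtain ⟨a, b, hab⟩ := hsplit z hz
  simpa [LinearMap.map_smul_of_tower, hxe, hxf] using hx0 _ (subset_span hab)

theorem exists_isTotallyIsotropic_generators [IsDomain O] [ValuationRing O] [IsNoetherianRing O]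
    [IsFractionRing O F] (halt : φ.IsAlt) (hΛ : Λ.FG)
    (hnd : IsNondegenerateOn φ (span F Λ)) :
    ∃ s t : Set V, s ⊆ Λ ∧ t ⊆ Λ ∧ Λ ≤ span O (s ∪ t) ∧
      IsTotallyIsotropic φ s ∧ IsTotallyIsotropic φ t := by
  induction hN : finrank F (span F (Λ : Set V)) using Nat.strong_induction_on generalizing Λ with
  | _ N ih =>
  obtain ⟨e, he, f, hf, hdvd⟩ := exists_mem_forall_apply_mem_span_singleton (φ := φ) hΛ
  by_cases hef : φ e f = 0
  · have hiso : IsTotallyIsotropic φ Λ := fun x hx y hy => by simpa [hef] using hdvd x hx y hy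
    refine ⟨∅, ∅, by simp, by simp, fun z hz => ?_, by simp [IsTotallyIsotropic],
      by simp [IsTotallyIsotropic]⟩
    simp [hnd z (subset_span hz) fun y hy => hiso.span z (subset_span hz) y hy]
  have hsplit := fun z (hz : z ∈ Λ) =>
    exists_sub_smul_sub_smul_mem_pairOrthogonal halt hdvd he hf hz
  have : Module.Finite F (span F (Λ : Set V)) := Module.Finite.iff_fg.mpr hΛ.span
  obtain ⟨s, t, hs, ht, hΛ', hs_iso, ht_iso⟩ :=
    ih _ (hN ▸ finrank_lt_finrank_of_lt (span_pairOrthogonal_lt he hef))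
      (hΛ.of_le pairOrthogonal_le) (hnd.span_pairOrthogonal halt hsplit) rfl
  refine ⟨insert e s, insert f t, Set.insert_subset he (hs.trans pairOrthogonal_le),
    Set.insert_subset hf (ht.trans pairOrthogonal_le), fun z hz => ?_,
    hs_iso.insert halt fun x hx => (hs hx).2.1,
    ht_iso.insert halt fun x hx => halt.eq_iff.mp (ht hx).2.2⟩
  obtain ⟨a, b, hab⟩ := hsplit z hz
  rw [show z = (z - a • e - b • f) + a • e + b • f by abel]
  refine add_mem (add_mem ?_ (smul_mem _ _ (subset_span (.inl (.inl rfl)))))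
    (smul_mem _ _ (subset_span (.inr (.inl rfl))))
  exact span_mono (Set.union_subset_union (Set.subset_insert _ _) (Set.subset_insert _ _)) (hΛ' hab)

end Lattice

theorem similitude_character_stabilizer_surjective_general
    (O₀ : Type) [CommRing O₀]
    (F : Type) [Field F]
    (O : Type) [CommRing O] [IsDomain O] [IsDiscreteValuationRing O]
    [Algebra O F] [IsFractionRing O F]
    [Algebra O₀ O] [Algebra O₀ F] [IsScalarTower O₀ O F]
    (V : Type) [AddCommGroup V] [Module F V] [Module O V] [IsScalarTower O F V]
    (φ : V →ₗ[F] V →ₗ[F] F) (halt : ∀ x : V, φ x x = 0)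
    (hnd : LinearMap.BilinForm.Nondegenerate φ)
    (Λ : Submodule O V) (hfg : Λ.FG) (hfull : Submodule.span F (Λ : Set V) = ⊤)
    (t : O₀ˣ) :
    ∃ g : V ≃ₗ[F] V, (∀ x : V, x ∈ Λ ↔ g x ∈ Λ) ∧
      ∀ x y : V, φ (g x) (g y) = algebraMap O₀ F (t : O₀) * φ x y := by
  obtain ⟨s₁, s₂, hs₁, -, hΛ, hiso₁, hiso₂⟩ := exists_isTotallyIsotropic_generators halt hfg
    (by rw [hfull]; exact fun x _ hx => hnd.1 x fun y => hx y mem_top)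
  have hcompl : IsCompl (span F s₁) (span F s₂) :=
    isCompl_of_isTotallyIsotropic hnd.1 hiso₁.span hiso₂.span <| by
      rw [← span_union, eq_top_iff, ← hfull]
      exact span_le.mpr fun x hx => span_le_restrictScalars O F _ (hΛ hx)
  have hp := isIdempotentElem_projection hcompl
  have hpΛ (x : V) (hx : x ∈ Λ) : (span F s₁).projection (span F s₂) hcompl x ∈ Λ :=
    span_le.mpr hs₁ (projection_mem_span_of_isCompl_span hcompl (hΛ hx))
  have ht : Units.map (algebraMap O₀ F : O₀ →* F) t =
      Units.map (algebraMap O F : O →* F) (Units.map (algebraMap O₀ O : O₀ →* O) t) :=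
    Units.ext (IsScalarTower.algebraMap_apply O₀ O F t)
  refine ⟨hp.dilation (Units.map (algebraMap O₀ F) t), fun x => ?_, fun x y => ?_⟩
  · rw [ht, hp.dilation_mem_iff hpΛ]
  · exact hp.apply_dilation_dilation
      (fun x y => hiso₁.span _ (projection_apply_mem hcompl x) _ (projection_apply_mem hcompl y))
      (fun x y => hiso₂.span _ (sub_projection_mem hcompl x) _ (sub_projection_mem hcompl y)) _ x y

/-- let `F₀` be a non-Archimedean local field of characteristic `≠ 2`
with ring of integers `O₀`, `F/F₀` a finite separable extension with ring of
integers `O`, and `Λ` an `O`-lattice in a symplectic `F`-space `(V, φ)`.  Then the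
similitude character maps the stabilizer of `Λ` in `GSp_{F₀}(V, φ)(F₀)` onto
`O₀^×`: for every unit `t` of `O₀` there is an `F`-linear automorphism `g` of `V`
with `g(Λ) = Λ` and `φ(gx, gy) = t·φ(x, y)` for all `x, y ∈ V`. -/
theorem similitude_character_stabilizer_surjective
    (O₀ F₀ : Type) [CommRing O₀] [IsDomain O₀] [IsDiscreteValuationRing O₀]
    [Field F₀] [Algebra O₀ F₀] [IsFractionRing O₀ F₀]
    [IsAdicComplete (IsLocalRing.maximalIdeal O₀) O₀]
    [Finite (IsLocalRing.ResidueField O₀)]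
    (hchar : (2 : F₀) ≠ 0)
    (F : Type) [Field F] [Algebra F₀ F] [FiniteDimensional F₀ F] [Algebra.IsSeparable F₀ F]
    (O : Type) [CommRing O] [IsDomain O] [IsDiscreteValuationRing O]
    [Algebra O F] [IsFractionRing O F]
    [Algebra O₀ O] [Algebra O₀ F] [IsScalarTower O₀ O F] [IsScalarTower O₀ F₀ F]
    (π : O) (hπ : Irreducible π)
    (V : Type) [AddCommGroup V] [Module F V] [Module O V] [IsScalarTower O F V]
    (φ : V →ₗ[F] V →ₗ[F] F) (halt : ∀ x : V, φ x x = 0)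
    (hnd : LinearMap.BilinForm.Nondegenerate φ)
    (n : ℕ) (hn : 1 ≤ n) (hdim : Module.finrank F V = 2 * n)
    (Λ : Submodule O V) (hfg : Λ.FG) (hfull : Submodule.span F (Λ : Set V) = ⊤)
    (t : O₀ˣ) :
    ∃ g : V ≃ₗ[F] V, (∀ x : V, x ∈ Λ ↔ g x ∈ Λ) ∧
      ∀ x y : V, φ (g x) (g y) = algebraMap O₀ F (t : O₀) * φ x y :=
  similitude_character_stabilizer_surjective_general O₀ F O V φ halt hnd Λ hfg hfull t
end

section
/- Define ν := ω − (1/2)·Σ_{v∈P} Σ_{j∈ℤ/f_vℤ} Σ_{i=1}^{m} ε^j_{v,i} ∈ X ⊗ ℚ and λ₀ := ω − Σ_{v∈P} ( ⌈f_v/2⌉ · Σ_{1≤i≤m, i odd} ε^{0}_{v,i} + ⌊f_v/2⌋ · Σ_{1≤i≤m, i even} ε^{0}_{v,i} ) ∈ X. Then ν − λ₀^◇ = Σ_{v∈P with f_v odd} Σ_{j∈ℤ/f_vℤ} (1/(2f_v)) · Σ_{1≤i≤m, i odd} α^{j∨}_{v,i}. In particular, the coefficient of ω in λ₀ is 1,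 and ν − λ₀^◇ is a linear combination of the simple coroots α^{j∨}_{v,i} with all coefficients in [0, 1) ∩ ℚ. -/
/-!
The average `λ₀^◇` does not depend on the period used to compute it, so it may be computed
with the period `∏ f_v`, for which `σ` is the identity. The average of `ε^0_{v,i}` is then
`f_v⁻¹ • ∑_j ε^j_{v,i}`, so the coefficient of `ε^j_{v,i}` in `ν - λ₀^◇` is
`⌈f_v/2⌉/f_v - 1/2` or `⌊f_v/2⌋/f_v - 1/2` according to the parity of `i`: this is
`±1/(2 f_v)` for odd `f_v` and `0` for even `f_v`. Finally, the alternating sum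
`∑_i (-1)^(i+1) ε^j_{v,i}` telescopes to `∑_{i odd} α^{j∨}_{v,i}`.
-/

open Finset

/-- Index set for the basis of the cocharacter lattice `X`: `none` is `ω`,
`some ⟨v, (j, i)⟩` is `ε^j_{v,i}` (with `i : Fin m` encoding the index `i+1 ∈ {1,…,m}`). -/
abbrev XIdx (P : Type) (f : P → ℕ) (m : ℕ) := Option ((v : P) × (ZMod (f v) × Fin m))

/-- The free `ℤ`-module `X` with basis `ω, ε^j_{v,i}`, with `ℚ`-coefficients. -/
abbrev XQ (P : Type) (f : P → ℕ) (m : ℕ) := XIdx P f m →₀ ℚ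

/-- The index shift underlying `σ`: `σ(ω) = ω`, `σ(ε^j_{v,i}) = ε^{j+1}_{v,i}`. -/
def xShift (P : Type) (f : P → ℕ) (m : ℕ) : XIdx P f m → XIdx P f m
  | none => none
  | some ⟨v, (j, i)⟩ => some ⟨v, (j + 1, i)⟩

/-- The automorphism `σ` of `X ⊗ ℚ`. -/
noncomputable def sigmaQ (P : Type) (f : P → ℕ) (m : ℕ) : Module.End ℚ (XQ P f m) :=
  Finsupp.lmapDomain ℚ ℚ (xShift P f m)

noncomputable def omegaQ (P : Type) (f : P → ℕ) (m : ℕ) : XQ P f m :=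
  Finsupp.single none 1

noncomputable def epsQ (P : Type) (f : P → ℕ) (m : ℕ) (v : P) (j : ZMod (f v)) (i : Fin m) :
    XQ P f m :=
  Finsupp.single (some ⟨v, (j, i)⟩) 1

/-- The simple coroot `α^{j∨}_{v,i}`: `ε^j_{v,i} − ε^j_{v,i+1}` for `i+1 ≤ m−1`,
and `ε^j_{v,m}` for the last index. -/
noncomputable def corootQ (P : Type) (f : P → ℕ) (m : ℕ) (v : P) (j : ZMod (f v)) (i : Fin m) :
    XQ P f m :=
  if h : (i : ℕ) + 1 < m then epsQ P f m v j i - epsQ P f m v j ⟨(i : ℕ) + 1, h⟩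
  else epsQ P f m v j i

/-- The Newton point `ν = ω − (1/2)·Σ_{v,j,i} ε^j_{v,i}`. -/
noncomputable def nuQ (P : Type) [Fintype P] (f : P → ℕ) [∀ v, NeZero (f v)] (m : ℕ) :
    XQ P f m :=
  omegaQ P f m -
    (1 / 2 : ℚ) • ∑ v : P, ∑ j : ZMod (f v), ∑ i : Fin m, epsQ P f m v j i

/-- `λ₀ = ω − Σ_v (⌈f_v/2⌉·Σ_{i odd} ε^0_{v,i} + ⌊f_v/2⌋·Σ_{i even} ε^0_{v,i})`
(indices `i ∈ {1,…,m}`, encoded by `Fin m` via `i ↦ i+1`). -/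
noncomputable def lamZeroQ (P : Type) [Fintype P] (f : P → ℕ) [∀ v, NeZero (f v)] (m : ℕ) :
    XQ P f m :=
  omegaQ P f m -
    ∑ v : P,
      ((((f v + 1) / 2 : ℕ) : ℚ) •
          ∑ i ∈ univ.filter (fun i : Fin m => Odd ((i : ℕ) + 1)), epsQ P f m v 0 i +
        (((f v / 2 : ℕ) : ℚ) •
          ∑ i ∈ univ.filter (fun i : Fin m => Even ((i : ℕ) + 1)), epsQ P f m v 0 i))

/-- `λ^◇ = (1/N)·Σ_{k=0}^{N−1} σ^k(λ)` for `N` a period of `λ`. -/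
noncomputable def diamondQ (P : Type) (f : P → ℕ) (m : ℕ) (N : ℕ) (lam : XQ P f m) :
    XQ P f m :=
  (N : ℚ)⁻¹ • ∑ k ∈ Finset.range N, (sigmaQ P f m ^ k) lam

theorem sum_range_mul_pow_apply {R M : Type*} [Semiring R] [AddCommMonoid M] [Module R M]
    {σ : Module.End R M} {x : M} {N : ℕ} (hx : (σ ^ N) x = x) (q : ℕ) :
    ∑ k ∈ range (N * q), (σ ^ k) x = q • ∑ k ∈ range N, (σ ^ k) x := by
  induction q with
  | zero => simp
  | succ q ih =>
    have hNq : (σ ^ (N * q)) x = x := by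
      rw [Module.End.pow_apply] at hx ⊢
      exact Function.IsPeriodicPt.mul_const hx q
    rw [mul_add_one, sum_range_add, ih, succ_nsmul]
    congr 1
    refine sum_congr rfl fun k _ => ?_
    rw [add_comm, pow_add, Module.End.mul_apply, hNq]

theorem inv_smul_sum_range_pow_apply_eq {M : Type*} [AddCommMonoid M] [Module ℚ M]
    {σ : Module.End ℚ M} {x : M} {N N' : ℕ} (hN : 0 < N) (hN' : 0 < N')
    (hx : (σ ^ N) x = x) (hx' : (σ ^ N') x = x) :
    (N : ℚ)⁻¹ • ∑ k ∈ range N, (σ ^ k) x = (N' : ℚ)⁻¹ • ∑ k ∈ range N', (σ ^ k) x := by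
  have h := (sum_range_mul_pow_apply hx N').symm.trans
    (mul_comm N N' ▸ sum_range_mul_pow_apply hx' N)
  rw [← Nat.cast_smul_eq_nsmul ℚ, ← Nat.cast_smul_eq_nsmul ℚ] at h
  have hN0 : (N : ℚ) ≠ 0 := by positivity
  have hN0' : (N' : ℚ) ≠ 0 := by positivity
  calc (N : ℚ)⁻¹ • ∑ k ∈ range N, (σ ^ k) x
      = ((N : ℚ)⁻¹ * (N' : ℚ)⁻¹) • ((N' : ℚ) • ∑ k ∈ range N, (σ ^ k) x) := by
        rw [smul_smul, mul_assoc, inv_mul_cancel₀ hN0', mul_one]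
    _ = (N' : ℚ)⁻¹ • ∑ k ∈ range N', (σ ^ k) x := by
        rw [h, smul_smul, mul_comm (N : ℚ)⁻¹, mul_assoc, inv_mul_cancel₀ hN0, mul_one]

theorem sum_range_natCast_eq_sum_univ {M : Type*} [AddCommMonoid M] {d : ℕ} [NeZero d]
    (g : ZMod d → M) : ∑ k ∈ range d, g k = ∑ j, g j :=
  sum_nbij' (fun k => (k : ZMod d)) ZMod.val (by simp) (by simp [ZMod.val_lt])
    (fun _ hk => ZMod.val_natCast_of_lt (mem_range.1 hk)) (fun j _ => ZMod.natCast_zmod_val j)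
    (fun _ _ => rfl)

theorem sum_range_ite_even_sub_succ {R M : Type*} [Ring R] [AddCommGroup M] [Module R M]
    (e : ℕ → M) (n : ℕ) :
    ∑ k ∈ range n, (if Even k then e k - e (k + 1) else 0) + (if Odd n then e n else 0) =
      ∑ k ∈ range n, (-1 : R) ^ k • e k := by
  induction n with
  | zero => simp
  | succ n ih =>
    rw [sum_range_succ, sum_range_succ, ← ih]
    rcases Nat.even_or_odd n with hn | hn
    · simp [hn, hn.neg_one_pow, Nat.not_odd_iff_even.2 hn]
      abel
    · simp [hn, hn.neg_one_pow, Nat.not_even_iff_odd.2 hn]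

section Sigma

variable {P : Type} {f : P → ℕ} {m : ℕ}

theorem xShift_iterate_none (n : ℕ) : (xShift P f m)^[n] none = none := by
  induction n with
  | zero => rfl
  | succ n ih => rw [Function.iterate_succ_apply', ih]; rfl

theorem xShift_iterate_some (n : ℕ) (v : P) (j : ZMod (f v)) (i : Fin m) :
    (xShift P f m)^[n] (some ⟨v, (j, i)⟩) = some ⟨v, (j + n, i)⟩ := by
  induction n with
  | zero => simp
  | succ n ih => rw [Function.iterate_succ_apply', ih, Nat.cast_succ, ← add_assoc]; rfl

theorem sigmaQ_pow_single (n : ℕ) (a : XIdx P f m) (c : ℚ) :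
    (sigmaQ P f m ^ n) (Finsupp.single a c) = Finsupp.single ((xShift P f m)^[n] a) c := by
  induction n with
  | zero => rfl
  | succ n ih =>
    rw [pow_succ', Module.End.mul_apply, ih, Function.iterate_succ_apply', sigmaQ,
      Finsupp.lmapDomain_apply, Finsupp.mapDomain_single]

theorem sigmaQ_pow_omegaQ (n : ℕ) : (sigmaQ P f m ^ n) (omegaQ P f m) = omegaQ P f m := by
  rw [omegaQ, sigmaQ_pow_single, xShift_iterate_none]

theorem sigmaQ_pow_epsQ (n : ℕ) (v : P) (j : ZMod (f v)) (i : Fin m) :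
    (sigmaQ P f m ^ n) (epsQ P f m v j i) = epsQ P f m v (j + n) i := by
  rw [epsQ, sigmaQ_pow_single, xShift_iterate_some, epsQ]

theorem sigmaQ_pow_eq_one {n : ℕ} (h : ∀ v, f v ∣ n) : sigmaQ P f m ^ n = 1 :=
  Finsupp.lhom_ext fun a c => by
    rcases a with _ | ⟨v, j, i⟩
    · rw [sigmaQ_pow_single, xShift_iterate_none, Module.End.one_apply]
    · rw [sigmaQ_pow_single, xShift_iterate_some, (ZMod.natCast_eq_zero_iff n (f v)).2 (h v),
        add_zero, Module.End.one_apply]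

theorem diamondQ_eq_sum_pow_apply (N : ℕ) (x : XQ P f m) :
    diamondQ P f m N x = ((N : ℚ)⁻¹ • ∑ k ∈ range N, sigmaQ P f m ^ k) x := by
  simp [diamondQ, LinearMap.sum_apply]

theorem diamondQ_eq_of_pow_apply_eq {N N' : ℕ} (hN : 0 < N) (hN' : 0 < N') {x : XQ P f m}
    (hx : (sigmaQ P f m ^ N) x = x) (hx' : (sigmaQ P f m ^ N') x = x) :
    diamondQ P f m N x = diamondQ P f m N' x :=
  inv_smul_sum_range_pow_apply_eq hN hN' hx hx'

theorem diamondQ_omegaQ {N : ℕ} (hN : 0 < N) : diamondQ P f m N (omegaQ P f m) = omegaQ P f m := by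
  simp [diamondQ, sigmaQ_pow_omegaQ, ← Nat.cast_smul_eq_nsmul ℚ, hN.ne']

theorem diamondQ_epsQ {N : ℕ} (hN : 0 < N) {v : P} [NeZero (f v)] (h : f v ∣ N)
    (j : ZMod (f v)) (i : Fin m) :
    diamondQ P f m N (epsQ P f m v j i) = (f v : ℚ)⁻¹ • ∑ j', epsQ P f m v j' i := by
  have hper : ∀ n, f v ∣ n → (sigmaQ P f m ^ n) (epsQ P f m v j i) = epsQ P f m v j i :=
    fun n hn => by rw [sigmaQ_pow_epsQ, (ZMod.natCast_eq_zero_iff n (f v)).2 hn, add_zero]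
  rw [diamondQ_eq_of_pow_apply_eq hN (NeZero.pos (f v)) (hper N h) (hper _ dvd_rfl), diamondQ]
  simp only [sigmaQ_pow_epsQ]
  rw [sum_range_natCast_eq_sum_univ (fun k => epsQ P f m v (j + k) i)]
  exact congrArg _ (Equiv.sum_comp (Equiv.addLeft j) (fun j' => epsQ P f m v j' i))

theorem sum_corootQ_odd (v : P) (j : ZMod (f v)) :
    ∑ i ∈ univ.filter (fun i : Fin m => Odd ((i : ℕ) + 1)), corootQ P f m v j i =
      ∑ i : Fin m, (-1 : ℚ) ^ (i : ℕ) • epsQ P f m v j i := by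
  set e : ℕ → XQ P f m := fun n => if h : n < m then epsQ P f m v j ⟨n, h⟩ else 0
  have he : ∀ i : Fin m, epsQ P f m v j i = e i := fun i => by simp [e]
  have hcoroot : ∀ i : Fin m, corootQ P f m v j i = e i - e (i + 1) := by
    intro i
    unfold corootQ
    split_ifs with h
    · rw [he, he]
    · rw [he]; simp [e, h]
  rw [sum_filter]
  simp only [Nat.odd_add_one, Nat.not_odd_iff_even, hcoroot, he]
  rw [Fin.sum_univ_eq_sum_range (fun k => if Even k then e k - e (k + 1) else 0),
    Fin.sum_univ_eq_sum_range (fun k => (-1 : ℚ) ^ k • e k), ← sum_range_ite_even_sub_succ]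
  simp [e]

end Sigma

/-- The coefficient of `-ε^0_{v,i+1}` in `λ₀` when `f_v = n`. -/
def lamZeroCoeff (n i : ℕ) : ℕ :=
  if Odd (i + 1) then (n + 1) / 2 else n / 2

theorem lamZeroCoeff_div_sub_half {n : ℕ} (hn : n ≠ 0) (i : ℕ) :
    (lamZeroCoeff n i : ℚ) / n - 1 / 2 = (if Odd n then 1 / (2 * (n : ℚ)) else 0) * (-1) ^ i := by
  have hsign : (-1 : ℚ) ^ i = if Odd (i + 1) then 1 else -1 := by
    rcases Nat.even_or_odd i with hi | hi <;> simp [hi, hi.neg_one_pow, Nat.odd_add_one]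
  rw [hsign, lamZeroCoeff]
  obtain ⟨t, rfl | rfl⟩ := Nat.even_or_odd' n
  · have h1 : (2 * t + 1) / 2 = t := by omega
    have h2 : 2 * t / 2 = t := by omega
    have ht : (t : ℚ) ≠ 0 := by norm_cast; omega
    rw [if_neg (Nat.not_odd_iff_even.2 (even_two_mul t)), h1, h2, ite_self, zero_mul]
    push_cast
    field_simp
    ring
  · have h1 : (2 * t + 1 + 1) / 2 = t + 1 := by omega
    have h2 : (2 * t + 1) / 2 = t := by omega
    rw [if_pos (odd_two_mul_add_one t), h1, h2]
    split_ifs <;> push_cast <;> field_simp <;> ring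

section LamZero

variable {P : Type} [Fintype P] {f : P → ℕ} [∀ v, NeZero (f v)] {m : ℕ}

theorem lamZeroQ_eq : lamZeroQ P f m =
    omegaQ P f m - ∑ v, ∑ i : Fin m, (lamZeroCoeff (f v) i : ℚ) • epsQ P f m v 0 i := by
  unfold lamZeroQ lamZeroCoeff
  congr 1
  refine sum_congr rfl fun v _ => ?_
  rw [sum_filter, sum_filter, smul_sum, smul_sum, ← sum_add_distrib]
  refine sum_congr rfl fun i _ => ?_
  by_cases hi : Odd ((i : ℕ) + 1) <;> simp [hi, Nat.not_even_iff_odd]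

theorem lamZeroQ_apply_none : lamZeroQ P f m none = 1 := by
  simp [lamZeroQ_eq, omegaQ, epsQ]

theorem diamondQ_lamZeroQ {N : ℕ} (hN : 0 < N)
    (hper : (sigmaQ P f m ^ N) (lamZeroQ P f m) = lamZeroQ P f m) :
    diamondQ P f m N (lamZeroQ P f m) = omegaQ P f m -
      ∑ v, ∑ i : Fin m, ((lamZeroCoeff (f v) i : ℚ) / f v) • ∑ j, epsQ P f m v j i := by
  have hF : 0 < ∏ v, f v := prod_pos fun v _ => NeZero.pos (f v)
  have hdvd : ∀ v, f v ∣ ∏ v, f v := fun v => dvd_prod_of_mem f (mem_univ v)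
  have hperF : (sigmaQ P f m ^ ∏ v, f v) (lamZeroQ P f m) = lamZeroQ P f m := by
    rw [sigmaQ_pow_eq_one hdvd, Module.End.one_apply]
  rw [diamondQ_eq_of_pow_apply_eq hN hF hper hperF, diamondQ_eq_sum_pow_apply, lamZeroQ_eq]
  simp only [map_sub, map_sum, map_smul, ← diamondQ_eq_sum_pow_apply, diamondQ_omegaQ hF,
    diamondQ_epsQ hF (hdvd _), smul_smul, div_eq_mul_inv]

theorem nuQ_sub_diamondQ_lamZeroQ {N : ℕ} (hN : 0 < N)
    (hper : (sigmaQ P f m ^ N) (lamZeroQ P f m) = lamZeroQ P f m) :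
    nuQ P f m - diamondQ P f m N (lamZeroQ P f m) =
      ∑ v ∈ univ.filter (fun v : P => Odd (f v)), ∑ j : ZMod (f v),
        (1 / (2 * (f v : ℚ))) • ∑ i : Fin m, (-1 : ℚ) ^ (i : ℕ) • epsQ P f m v j i := by
  rw [nuQ, diamondQ_lamZeroQ hN hper, sum_filter]
  calc _ = ∑ v, ∑ j, ∑ i : Fin m,
        ((lamZeroCoeff (f v) i : ℚ) / f v - 1 / 2) • epsQ P f m v j i := by
        simp only [smul_sum, sub_smul, sum_sub_distrib]
        rw [sub_sub_sub_cancel_left]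
        congr 1
        exact sum_congr rfl fun v _ => sum_comm
    _ = _ := by
        refine sum_congr rfl fun v _ => ?_
        simp only [lamZeroCoeff_div_sub_half (NeZero.ne (f v)), mul_smul, ← smul_sum]
        split_ifs <;> simp

theorem best_integral_approximation_general (P : Type) [Fintype P]
    (f : P → ℕ) [∀ v, NeZero (f v)] (m : ℕ)
    (N : ℕ) (hN : 0 < N) (hper : (sigmaQ P f m ^ N) (lamZeroQ P f m) = lamZeroQ P f m) :
    (nuQ P f m - diamondQ P f m N (lamZeroQ P f m) =
      ∑ v ∈ univ.filter (fun v : P => Odd (f v)), ∑ j : ZMod (f v),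
        (1 / (2 * (f v : ℚ))) •
          ∑ i ∈ univ.filter (fun i : Fin m => Odd ((i : ℕ) + 1)), corootQ P f m v j i) ∧
    (lamZeroQ P f m) none = 1 ∧
    (∃ c : ((v : P) × (ZMod (f v) × Fin m)) → ℚ,
      (∀ t, 0 ≤ c t ∧ c t < 1) ∧
      nuQ P f m - diamondQ P f m N (lamZeroQ P f m) =
        ∑ t : (v : P) × (ZMod (f v) × Fin m), c t • corootQ P f m t.1 t.2.1 t.2.2) := by
  have hν : nuQ P f m - diamondQ P f m N (lamZeroQ P f m) =
      ∑ v ∈ univ.filter (fun v : P => Odd (f v)), ∑ j : ZMod (f v),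
        (1 / (2 * (f v : ℚ))) •
          ∑ i ∈ univ.filter (fun i : Fin m => Odd ((i : ℕ) + 1)), corootQ P f m v j i := by
    simp only [nuQ_sub_diamondQ_lamZeroQ hN hper, sum_corootQ_odd]
  refine ⟨hν, lamZeroQ_apply_none, fun t =>
    if Odd (f t.1) ∧ Odd ((t.2.2 : ℕ) + 1) then 1 / (2 * (f t.1 : ℚ)) else 0, fun t => ?_, ?_⟩
  · have hf : (1 : ℚ) ≤ f t.1 := by exact_mod_cast NeZero.one_le
    dsimp only
    split_ifs
    · constructor
      · positivity
      · rw [div_lt_one (by positivity)]; linarith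
    · exact ⟨le_rfl, one_pos⟩
  · rw [hν, Fintype.sum_sigma, sum_filter]
    refine sum_congr rfl fun v _ => ?_
    rw [Fintype.sum_prod_type]
    split_ifs with hv
    · simp [hv, smul_sum, sum_filter]
    · simp [hv]

/-- `ν − λ₀^◇ = Σ_{v : f_v odd} Σ_{j} (1/(2f_v)) Σ_{i odd} α^{j∨}_{v,i}`;
in particular the coefficient of `ω` in `λ₀` is `1`, and `ν − λ₀^◇` is a linear
combination of simple coroots with coefficients in `[0,1) ∩ ℚ`. -/
theorem best_integral_approximation (P : Type) [Fintype P] [Nonempty P]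
    (f : P → ℕ) [∀ v, NeZero (f v)] (m : ℕ) (hm : 1 ≤ m)
    (N : ℕ) (hN : 0 < N) (hper : (sigmaQ P f m ^ N) (lamZeroQ P f m) = lamZeroQ P f m) :
    (nuQ P f m - diamondQ P f m N (lamZeroQ P f m) =
      ∑ v ∈ univ.filter (fun v : P => Odd (f v)), ∑ j : ZMod (f v),
        (1 / (2 * (f v : ℚ))) •
          ∑ i ∈ univ.filter (fun i : Fin m => Odd ((i : ℕ) + 1)), corootQ P f m v j i) ∧
    (lamZeroQ P f m) none = 1 ∧
    (∃ c : ((v : P) × (ZMod (f v) × Fin m)) → ℚ,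
      (∀ t, 0 ≤ c t ∧ c t < 1) ∧
      nuQ P f m - diamondQ P f m N (lamZeroQ P f m) =
        ∑ t : (v : P) × (ZMod (f v) × Fin m), c t • corootQ P f m t.1 t.2.1 t.2.2) :=
  best_integral_approximation_general P f m N hN hper
end LamZero
end

section
/- Let q ≥ 2 be a real number and m ≥ 1 an integer, and for an integer 0 ≤ c ≤ ⌊m/2⌋ set κ(m, c) := ∏_{i=1}^{c} (q^{4i} − 1) · ∏_{i=1}^{m−2c} (q^i − (−1)^i). Then: if m is odd, κ(m, c) < κ(m, 0) for every 1 ≤ c ≤ ⌊m/2⌋; and if m is even, κ(m, c) < κ(m, m/2) for every 0 ≤ c ≤ m/2 − 1. That is, κ(m, ·) attains its maximum precisely at c = 0 when m is odd and precisely at c = m/2 when m is even. -/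
/-!
Write `g i = q ^ i - (-1) ^ i` and `f i = q ^ (4 * i) - 1`, so that
`κ(m, c) = ∏_{i ≤ c} f i · ∏_{i ≤ m - 2c} g i` with all factors positive for `q > 1`.
Comparing two values of `c` trades `k` factors `f` for `2k` factors `g`, which can be matched
pairwise: `f i < g a · g (a + 1)` for even `a ≥ 2i`, and `g (2j + 1) · g (2j + 2) < f (j + 1)`.
For odd `m` the surplus `g`'s of `κ(m, 0)` over `κ(m, c)` start at the even index `m - 2c + 1`,
so the first comparison gives `κ(m, c) < κ(m, 0)`; for even `m` the second gives
`κ(m, c) < κ(m, m/2)`. After expanding, each pairwise difference is a positive multiple of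
`q^{4i} - q^{2i}`.
-/

open Finset

/-- `κ(m, c) = ∏_{i=1}^{c} (q^{4i} − 1) · ∏_{i=1}^{m−2c} (q^i − (−1)^i)`
(empty products equal 1). -/
noncomputable def kappaPoly (q : ℝ) (m c : ℕ) : ℝ :=
  (∏ i ∈ Finset.Icc 1 c, (q ^ (4 * i) - 1)) *
    ∏ i ∈ Finset.Icc 1 (m - 2 * c), (q ^ i - (-1 : ℝ) ^ i)

lemma Nat.Icc_one_eq_Ioc_zero (n : ℕ) : Icc 1 n = Ioc 0 n :=
  Icc_add_one_left_eq_Ioc 0 n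

section Intervals

variable {M : Type*} [CommMonoid M]

lemma prod_Ioc_add_eq_prod_range (f : ℕ → M) (a k : ℕ) :
    ∏ i ∈ Ioc a (a + k), f i = ∏ j ∈ range k, f (a + j + 1) := by
  induction k with
  | zero => simp
  | succ k ih => rw [← add_assoc, prod_Ioc_succ_top (by omega), ih, prod_range_succ]

lemma prod_Ioc_add_two_mul_eq_prod_range (f : ℕ → M) (a k : ℕ) :
    ∏ i ∈ Ioc a (a + 2 * k), f i =
      ∏ j ∈ range k, f (a + 2 * j + 1) * f (a + 2 * j + 2) := by
  induction k with
  | zero => simp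
  | succ k ih =>
    rw [show a + 2 * (k + 1) = a + 2 * k + 1 + 1 by ring, prod_Ioc_succ_top (by omega),
      prod_Ioc_succ_top (by omega), ih, prod_range_succ, mul_assoc]

lemma prod_Icc_one_eq_prod_range (f : ℕ → M) (n : ℕ) :
    ∏ i ∈ Icc 1 n, f i = ∏ j ∈ range n, f (j + 1) := by
  rw [Nat.Icc_one_eq_Ioc_zero]
  simpa using prod_Ioc_add_eq_prod_range f 0 n

end Intervals

section Factors

variable {q : ℝ}

lemma sub_neg_one_pow_pos (hq : 1 < q) {i : ℕ} (hi : 1 ≤ i) : 0 < q ^ i - (-1) ^ i := by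
  have h₁ : 1 < q ^ i := one_lt_pow₀ hq (by omega)
  have h₂ : (-1 : ℝ) ^ i ≤ 1 := (le_abs_self _).trans (abs_neg_one_pow i).le
  linarith

lemma pow_four_mul_sub_one_pos (hq : 1 < q) {i : ℕ} (hi : 1 ≤ i) : 0 < q ^ (4 * i) - 1 :=
  sub_pos.2 (one_lt_pow₀ hq (by omega))

lemma pow_four_mul_sub_one_lt_mul (hq : 1 < q) {i a : ℕ} (hi : 1 ≤ i) (ha : 2 * i ≤ a) :
    q ^ (4 * i) - 1 < (q ^ a - 1) * (q ^ (a + 1) + 1) := by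
  have hx : 1 < q ^ (2 * i) := one_lt_pow₀ hq (by omega)
  calc q ^ (4 * i) - 1 = q ^ (2 * i) * q ^ (2 * i) - 1 := by rw [← pow_add]; ring_nf
    _ < (q ^ (2 * i) - 1) * (q ^ (2 * i) * q + 1) := by
        nlinarith [mul_pos (mul_pos (sub_pos.2 hx) (sub_pos.2 hq)) (zero_lt_one.trans hx)]
    _ = (q ^ (2 * i) - 1) * (q ^ (2 * i + 1) + 1) := by rw [pow_succ]
    _ ≤ (q ^ a - 1) * (q ^ (a + 1) + 1) := by
        have := one_le_pow₀ (n := a) hq.le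
        gcongr <;> linarith

lemma mul_lt_pow_four_mul_sub_one (hq : 1 < q) {j b : ℕ} (hb : j + 1 ≤ b) :
    (q ^ (2 * j + 1) + 1) * (q ^ (2 * j + 2) - 1) < q ^ (4 * b) - 1 := by
  have hy : 1 < q ^ (2 * j + 1) := one_lt_pow₀ hq (by omega)
  have hyq : 1 < q ^ (2 * j + 1) * q := one_lt_mul_of_lt_of_le hy hq.le
  calc (q ^ (2 * j + 1) + 1) * (q ^ (2 * j + 2) - 1)
      = (q ^ (2 * j + 1) + 1) * (q ^ (2 * j + 1) * q - 1) := by rw [← pow_succ]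
    _ < (q ^ (2 * j + 1) * q) * (q ^ (2 * j + 1) * q) - 1 := by
        nlinarith [mul_pos (mul_pos (zero_lt_one.trans hy) (sub_pos.2 hq)) (sub_pos.2 hyq)]
    _ = q ^ (4 * (j + 1)) - 1 := by rw [← pow_succ, ← pow_add]; ring_nf
    _ ≤ q ^ (4 * b) - 1 := by gcongr; exact hq.le

end Factors

section Kappa

variable {q : ℝ}

lemma prod_Icc_sub_neg_one_pow_pos (hq : 1 < q) (n : ℕ) :
    0 < ∏ i ∈ Icc 1 n, (q ^ i - (-1) ^ i) :=
  prod_pos fun _ hi ↦ sub_neg_one_pow_pos hq (mem_Icc.1 hi).1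

lemma prod_Icc_pow_four_mul_sub_one_pos (hq : 1 < q) (c : ℕ) :
    0 < ∏ i ∈ Icc 1 c, (q ^ (4 * i) - 1) :=
  prod_pos fun _ hi ↦ pow_four_mul_sub_one_pos hq (mem_Icc.1 hi).1

theorem kappaPoly_lt_kappaPoly_zero (hq : 1 < q) {c s : ℕ} (hc : 1 ≤ c) :
    kappaPoly q (2 * (c + s) + 1) c < kappaPoly q (2 * (c + s) + 1) 0 := by
  set n := 2 * s + 1
  have hsplit : ∏ i ∈ Icc 1 (2 * (c + s) + 1), (q ^ i - (-1) ^ i) =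
      (∏ i ∈ Icc 1 n, (q ^ i - (-1) ^ i)) *
        ∏ j ∈ range c, (q ^ (n + 2 * j + 1) - (-1) ^ (n + 2 * j + 1)) *
          (q ^ (n + 2 * j + 2) - (-1) ^ (n + 2 * j + 2)) := by
    rw [show 2 * (c + s) + 1 = n + 2 * c by omega, Nat.Icc_one_eq_Ioc_zero, Nat.Icc_one_eq_Ioc_zero,
      ← prod_Ioc_consecutive _ (Nat.zero_le n) (Nat.le_add_right n (2 * c)),
      prod_Ioc_add_two_mul_eq_prod_range]
  have hlt : ∏ j ∈ range c, (q ^ (4 * (j + 1)) - 1) < ∏ j ∈ range c,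
      (q ^ (n + 2 * j + 1) - (-1) ^ (n + 2 * j + 1)) *
        (q ^ (n + 2 * j + 2) - (-1) ^ (n + 2 * j + 2)) := by
    refine prod_lt_prod_of_nonempty (fun j _ ↦ pow_four_mul_sub_one_pos hq (by omega))
      (fun j _ ↦ ?_) (nonempty_range_iff.2 (by omega))
    rw [Even.neg_one_pow ⟨s + j + 1, by omega⟩, Odd.neg_one_pow ⟨s + j + 1, by omega⟩,
      sub_neg_eq_add]
    exact pow_four_mul_sub_one_lt_mul hq (by omega) (by omega)
  have hB := prod_Icc_sub_neg_one_pow_pos hq n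
  rw [kappaPoly, kappaPoly, show 2 * (c + s) + 1 - 2 * c = n by omega, mul_zero, Nat.sub_zero,
    hsplit, prod_Icc_one_eq_prod_range, Icc_eq_empty_of_lt zero_lt_one, prod_empty, one_mul,
    mul_comm]
  exact mul_lt_mul_of_pos_left hlt hB

theorem kappaPoly_lt_kappaPoly_half (hq : 1 < q) {c k : ℕ} (hk : 1 ≤ k) :
    kappaPoly q (2 * (c + k)) c < kappaPoly q (2 * (c + k)) (c + k) := by
  have hsplit : ∏ i ∈ Icc 1 (c + k), (q ^ (4 * i) - 1) =
      (∏ i ∈ Icc 1 c, (q ^ (4 * i) - 1)) * ∏ j ∈ range k, (q ^ (4 * (c + j + 1)) - 1) := by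
    rw [Nat.Icc_one_eq_Ioc_zero, Nat.Icc_one_eq_Ioc_zero,
      ← prod_Ioc_consecutive _ (Nat.zero_le c) (Nat.le_add_right c k), prod_Ioc_add_eq_prod_range]
  have hpairs : ∏ i ∈ Icc 1 (2 * k), (q ^ i - (-1) ^ i) = ∏ j ∈ range k,
      (q ^ (2 * j + 1) - (-1) ^ (2 * j + 1)) * (q ^ (2 * j + 2) - (-1) ^ (2 * j + 2)) := by
    rw [Nat.Icc_one_eq_Ioc_zero]
    simpa using prod_Ioc_add_two_mul_eq_prod_range (fun i ↦ q ^ i - (-1) ^ i) 0 k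
  have hlt : ∏ j ∈ range k, (q ^ (2 * j + 1) - (-1) ^ (2 * j + 1)) *
      (q ^ (2 * j + 2) - (-1) ^ (2 * j + 2)) < ∏ j ∈ range k, (q ^ (4 * (c + j + 1)) - 1) := by
    refine prod_lt_prod_of_nonempty (fun j _ ↦ mul_pos (sub_neg_one_pow_pos hq (by omega))
      (sub_neg_one_pow_pos hq (by omega))) (fun j _ ↦ ?_) (nonempty_range_iff.2 (by omega))
    rw [Odd.neg_one_pow ⟨j, rfl⟩, Even.neg_one_pow ⟨j + 1, by ring⟩, sub_neg_eq_add]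
    exact mul_lt_pow_four_mul_sub_one hq (by omega)
  have hA := prod_Icc_pow_four_mul_sub_one_pos hq c
  rw [kappaPoly, kappaPoly, show 2 * (c + k) - 2 * c = 2 * k by omega,
    show 2 * (c + k) - 2 * (c + k) = 0 by omega, hsplit, hpairs, Icc_eq_empty_of_lt zero_lt_one,
    prod_empty, mul_one]
  exact mul_lt_mul_of_pos_left hlt hA

end Kappa

theorem kappa_max_general (q : ℝ) (hq : 2 ≤ q) (m : ℕ) :
    (Odd m → ∀ c : ℕ, 1 ≤ c → c ≤ m / 2 → kappaPoly q m c < kappaPoly q m 0) ∧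
    (Even m → ∀ c : ℕ, c < m / 2 → kappaPoly q m c < kappaPoly q m (m / 2)) := by
  have hq₁ : 1 < q := by linarith
  constructor
  · rintro ⟨t, rfl⟩ c hc hct
    obtain ⟨s, rfl⟩ := Nat.exists_eq_add_of_le (show c ≤ t by omega)
    exact kappaPoly_lt_kappaPoly_zero hq₁ hc
  · rintro ⟨t, rfl⟩ c hct
    obtain ⟨k, rfl⟩ := Nat.exists_eq_add_of_lt (show c < t by omega)
    rw [← two_mul, Nat.mul_div_cancel_left _ two_pos]
    exact kappaPoly_lt_kappaPoly_half hq₁ (Nat.le_add_left 1 k)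

/-- for a real number `q ≥ 2` and an integer `m ≥ 1`,
`κ(m, ·)` attains its maximum precisely at `c = 0` when `m` is odd and
precisely at `c = m/2` when `m` is even. -/
theorem kappa_max (q : ℝ) (hq : 2 ≤ q) (m : ℕ) (hm : 1 ≤ m) :
    (Odd m → ∀ c : ℕ, 1 ≤ c → c ≤ m / 2 → kappaPoly q m c < kappaPoly q m 0) ∧
    (Even m → ∀ c : ℕ, c < m / 2 → kappaPoly q m c < kappaPoly q m (m / 2)) :=
  kappa_max_general q hq m
end

section
/- Let M = M⁰ ⊕ M¹ with M⁰, M¹ free W-modules of rank 2, equipped with F, V, Π as in conditions (i)–(ii). Suppose M has Lie type (2,0), i.e., dim_k M⁰/V(M¹) = 2 and V(M⁰) = M¹. Then: V(M¹) = p·M⁰, F(M⁰) = M¹, F(M¹) = p·M⁰, Π(M⁰) = M¹, Π(M¹) = p·M⁰, the module M/(F(M) + V(M)) has k-dimension 2 and is concentrated in the summand indexed by 0, and V²(M) = p·M, so M is a superspecial Dieudonné module. -/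
/-!
Everything rests on the inclusion `V(M¹) ⊆ p·M⁰`. Otherwise some element of `V(M¹) ⊆ M⁰` has a
unit coordinate in a basis of `M⁰`, and together with the other basis vector it generates `M⁰`,
so `M⁰/V(M¹)` would be generated by one element. As `V(F(M⁰)) = p·M⁰`, this gives
`V(M¹) = p·M⁰`. Since `M` is torsion free, `F`, `V` and `Π` are injective, and the other identities
follow formally from `FV = VF = p`, `Π² = -p`, `FΠ = ΠF` and `V(M⁰) = M¹`; for instance
`V²(M) = V(M¹ + p·M⁰) = p·M⁰ + p·M¹`. Finally `F(M) + V(M) = M¹ + p·M⁰`, and by Nakayama's lemma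
the rank-two module `M⁰` is not contained in `M¹ + p·M⁰` plus one further cyclic submodule.
-/

open Pointwise

variable (p : ℕ) [Fact p.Prime] (k : Type) [Field k] [IsAlgClosed k] [CharP k p]

/-- The Frobenius automorphism `σ` of `W = W(k)`. -/
noncomputable def sigW : WittVector p k →+* WittVector p k :=
  (WittVector.frobeniusEquiv p k : WittVector p k ≃+* WittVector p k)

/-- The inverse `σ⁻¹` of the Frobenius automorphism of `W = W(k)`. -/
noncomputable def sigWinv : WittVector p k →+* WittVector p k :=
  ((WittVector.frobeniusEquiv p k).symm : WittVector p k ≃+* WittVector p k)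

section General

open Submodule

variable {R M N : Type*} [CommRing R] [AddCommGroup M] [Module R M] [AddCommGroup N] [Module R N]

lemma Module.Basis.span_pair_eq_top_of_isUnit_repr (b : Module.Basis (Fin 2) R N) {i j : Fin 2}
    (hij : i ≠ j) {v : N} (hv : IsUnit (b.repr v i)) : span R {v, b j} = ⊤ := by
  obtain ⟨u, hu⟩ := hv
  have huniv : (Finset.univ : Finset (Fin 2)) = {i, j} :=
    (Finset.eq_univ_of_card _ (by simp [Finset.card_pair hij])).symm
  have hv : (u : R) • b i + b.repr v j • b j = v := by
    rw [hu, ← Finset.sum_pair hij (f := fun l ↦ b.repr v l • b l), ← huniv, b.sum_repr]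
  have hbi : b i = (↑u⁻¹ : R) • (v - b.repr v j • b j) := by
    rw [← eq_sub_of_add_eq hv, smul_smul, u.inv_mul, one_smul]
  rw [eq_top_iff, ← b.span_eq, span_le]
  rintro _ ⟨l, rfl⟩
  obtain rfl | rfl : l = i ∨ l = j := by simpa [huniv] using Finset.mem_univ l
  · rw [hbi]
    exact smul_mem _ _ (sub_mem (subset_span (by simp)) (smul_mem _ _ (subset_span (by simp))))
  · exact subset_span (by simp)

lemma Module.Basis.span_coe_pair {P : Submodule R M} (b : Module.Basis (Fin 2) R P) :
    span R {(b 0 : M), (b 1 : M)} = P := by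
  have hrange : Set.range b = {b 0, b 1} := by
    ext; simp [Fin.exists_fin_two, eq_comm]
  rw [← Set.image_pair, ← P.coe_subtype, ← map_span, ← hrange, b.span_eq, map_subtype_top]

lemma Module.Basis.exists_eq_smul_of_forall_dvd_repr {ι : Type*} [Fintype ι]
    (b : Module.Basis ι R N) {r : R} {v : N} (h : ∀ i, r ∣ b.repr v i) : ∃ w, v = r • w := by
  choose d hd using h
  refine ⟨∑ i, d i • b i, ?_⟩
  conv_lhs => rw [← b.sum_repr v]
  simp only [hd, Finset.smul_sum, smul_smul]

lemma Submodule.le_pointwise_smul_of_forall_not_le_sup_span_singleton [IsLocalRing R] {ϖ : R}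
    (hϖ : IsLocalRing.maximalIdeal R = Ideal.span {ϖ}) {P S : Submodule R M}
    (b : Module.Basis (Fin 2) R P) (hSP : S ≤ P) (h : ∀ x ∈ P, ¬ P ≤ S ⊔ span R {x}) :
    S ≤ ϖ • P := by
  intro v hvS
  by_contra hv
  obtain ⟨i, hi⟩ : ∃ i, IsUnit (b.repr ⟨v, hSP hvS⟩ i) := by
    by_contra! hnu
    obtain ⟨w, hw⟩ := b.exists_eq_smul_of_forall_dvd_repr fun i ↦
      Ideal.mem_span_singleton.1 (hϖ ▸ (IsLocalRing.mem_maximalIdeal _).2 (hnu i))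
    rw [show v = ϖ • (w : M) from congrArg Subtype.val hw] at hv
    exact hv (smul_mem_pointwise_smul _ _ _ w.2)
  obtain ⟨j, hji⟩ := exists_ne i
  refine h (b j) (b j).2 fun z hz ↦ ?_
  have hz' : z ∈ (span R {⟨v, hSP hvS⟩, b j}).map P.subtype := by
    rw [b.span_pair_eq_top_of_isUnit_repr hji.symm hi, map_subtype_top]
    exact hz
  rw [map_span, Set.image_pair, span_insert] at hz'
  exact sup_le_sup_right ((span_singleton_le_iff_mem _ _).2 hvS) _ hz'

lemma Submodule.not_le_sup_span_singleton_of_disjoint [Nontrivial R] {P L : Submodule R M}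
    (b : Module.Basis (Fin 2) R P) (hPL : Disjoint P L) (x : M) : ¬ P ≤ L ⊔ span R {x} := by
  intro h
  obtain ⟨l₀, hl₀, _, hy₀, h₀⟩ := mem_sup.1 (h (b 0).2)
  obtain ⟨a, rfl⟩ := mem_span_singleton.1 hy₀
  obtain ⟨l₁, hl₁, _, hy₁, h₁⟩ := mem_sup.1 (h (b 1).2)
  obtain ⟨c, rfl⟩ := mem_span_singleton.1 hy₁
  have hcomb : c • (b 0 : M) + (-a) • (b 1 : M) = c • l₀ - a • l₁ := by
    rw [← h₀, ← h₁]
    module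
  have hzero : c • (b 0 : M) + (-a) • (b 1 : M) = 0 :=
    disjoint_def.1 hPL _ (add_mem (smul_mem _ _ (b 0).2) (smul_mem _ _ (b 1).2))
      (hcomb ▸ sub_mem (smul_mem _ _ hl₀) (smul_mem _ _ hl₁))
  have ha : -a = 0 := Fintype.linearIndependent_iff.1
    (b.linearIndependent.map' P.subtype P.ker_subtype) ![c, -a] (by simpa using hzero) 1
  rw [neg_eq_zero.1 ha, zero_smul, add_zero] at h₀
  exact b.ne_zero 0 (Subtype.ext (disjoint_def.1 hPL _ (b 0).2 (h₀ ▸ hl₀)))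

lemma Submodule.not_le_sup_pointwise_smul_sup_span_singleton [Nontrivial R] {ϖ : R}
    (hϖ : ϖ ∈ Ideal.jacobson ⊥) {P L : Submodule R M} (b : Module.Basis (Fin 2) R P)
    (hPL : Disjoint P L) (x : M) : ¬ P ≤ L ⊔ ϖ • P ⊔ span R {x} := by
  intro h
  refine not_le_sup_span_singleton_of_disjoint b hPL x
    (le_of_le_smul_of_le_jacobson_bot (Module.Finite.iff_fg.1 (Module.Finite.of_basis b))
      ((Ideal.span_singleton_le_iff_mem _).2 hϖ) ?_)
  rwa [ideal_span_singleton_smul, sup_right_comm]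

lemma Submodule.neg_pointwise_smul (r : R) (N : Submodule R M) : (-r) • N = r • N := by
  ext x
  simp only [mem_smul_pointwise_iff_exists]
  constructor <;> rintro ⟨y, hy, rfl⟩ <;> exact ⟨-y, neg_mem hy, by simp⟩

lemma Submodule.map_map_eq_pointwise_smul {σ τ : R →+* R} [RingHomSurjective σ]
    [RingHomSurjective τ] {f : M →ₛₗ[σ] M} {g : M →ₛₗ[τ] M} {r : R} (h : ∀ x, g (f x) = r • x)
    (N : Submodule R M) : (N.map f).map g = r • N := by
  ext x
  simp only [mem_map, mem_smul_pointwise_iff_exists]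
  constructor
  · rintro ⟨_, ⟨y, hy, rfl⟩, rfl⟩
    exact ⟨y, hy, (h y).symm⟩
  · rintro ⟨y, hy, rfl⟩
    exact ⟨f y, ⟨y, hy, rfl⟩, h y⟩

lemma Submodule.map_pointwise_smulₛₗ {σ : R →+* R} [RingHomSurjective σ] (f : M →ₛₗ[σ] M)
    {r : R} (hr : σ r = r) (N : Submodule R M) : (r • N).map f = r • N.map f := by
  ext x
  simp only [mem_map, mem_smul_pointwise_iff_exists]
  constructor
  · rintro ⟨_, ⟨y, hy, rfl⟩, rfl⟩
    exact ⟨f y, ⟨y, hy, rfl⟩, by rw [map_smulₛₗ, hr]⟩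
  · rintro ⟨_, ⟨y, hy, rfl⟩, rfl⟩
    exact ⟨r • y, ⟨y, hy, rfl⟩, by rw [map_smulₛₗ, hr]⟩

lemma Submodule.map_eq_of_map_eq_pointwise_smul {σ τ : R →+* R} [RingHomSurjective σ]
    [RingHomSurjective τ] {f : M →ₛₗ[σ] M} {g : M →ₛₗ[τ] M} {r : R} (hg : Function.Injective g)
    (hgf : ∀ x, g (f x) = r • x) {N L : Submodule R M} (hfNL : ∀ x ∈ N, f x ∈ L)
    (hgL : L.map g = r • N) : N.map f = L :=
  le_antisymm (map_le_iff_le_comap.2 hfNL)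
    ((map_le_map_iff_of_injective hg _ _).1 (by rw [hgL, map_map_eq_pointwise_smul hgf]))

lemma Submodule.image_eq_image_smul_of_map_eq {σ : R →+* R} [RingHomSurjective σ]
    {f : M →ₛₗ[σ] M} {r : R} {N N' : Submodule R M} (h : N.map f = r • N') :
    f '' N = (fun x ↦ r • x) '' N' := by
  rw [← map_coe, h, coe_pointwise_smul, Set.image_smul]

lemma injective_of_comp_eq_smul [IsDomain R] [Module.IsTorsionFree R M] {f g : M → M} {r : R}
    (hr : r ≠ 0) (h : ∀ x, g (f x) = r • x) : Function.Injective f := fun x y hxy ↦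
  smul_right_injective M hr (show r • x = r • y by rw [← h, ← h, hxy])

end General

instance : RingHomSurjective (sigW p k) := ⟨(WittVector.frobeniusEquiv p k).surjective⟩

instance : RingHomSurjective (sigWinv p k) := ⟨(WittVector.frobeniusEquiv p k).symm.surjective⟩

section Dieudonne

open Submodule

variable {p k} {M : Type} [AddCommGroup M] [Module (WittVector p k) M]
  {M0 M1 : Submodule (WittVector p k) M}
  {Fr : M →ₛₗ[sigW p k] M} {Vr : M →ₛₗ[sigWinv p k] M} {Pi : M →ₗ[WittVector p k] M}

lemma WittVector.natCast_p_mem_jacobson_bot : (p : WittVector p k) ∈ Ideal.jacobson ⊥ := by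
  rw [IsLocalRing.jacobson_eq_maximalIdeal ⊥ bot_ne_top]
  exact (WittVector.irreducible p).not_isUnit

lemma map_V_eq_p_smul (b0 : Module.Basis (Fin 2) (WittVector p k) M0)
    (Fr01 : ∀ x ∈ M0, Fr x ∈ M1) (Vr10 : ∀ x ∈ M1, Vr x ∈ M0)
    (VF : ∀ x, Vr (Fr x) = (p : WittVector p k) • x)
    (hlie : ∀ x ∈ M0, ¬ M0 ≤ span (WittVector p k) (Vr '' M1) ⊔ span (WittVector p k) {x}) :
    M1.map Vr = (p : WittVector p k) • M0 := by
  refine le_antisymm ?_ ?_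
  · rw [← span_eq M1, map_span]
    exact le_pointwise_smul_of_forall_not_le_sup_span_singleton
      (WittVector.irreducible p).maximalIdeal_eq b0
      (span_le.2 (Set.image_subset_iff.2 Vr10)) hlie
  · rw [← map_map_eq_pointwise_smul VF]
    exact map_mono (map_le_iff_le_comap.2 Fr01)

lemma map_Pi_eq_p_smul (hF : Function.Injective Fr)
    (FV : ∀ x, Fr (Vr x) = (p : WittVector p k) • x) (FrPi : ∀ x, Fr (Pi x) = Pi (Fr x))
    (PiSq : ∀ x, Pi (Pi x) = (-p : WittVector p k) • x) (Pi01 : ∀ x ∈ M0, Pi x ∈ M1)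
    (hVM0 : M0.map Vr = M1) (hVM1 : M1.map Vr = (p : WittVector p k) • M0) :
    M1.map Pi = (p : WittVector p k) • M0 := by
  have hPiV : ∀ x, Pi (Vr x) = Vr (Pi x) := fun x ↦ hF (by rw [FrPi, FV, FV, map_smul])
  refine le_antisymm ?_ ?_
  · calc M1.map Pi = (M0.map Vr).map Pi := by rw [hVM0]
      _ = (M0.map Pi).map Vr := by
        rw [← map_comp, ← map_comp]
        congr 1
        ext x
        exact hPiV x
      _ ≤ M1.map Vr := map_mono (map_le_iff_le_comap.2 Pi01)
      _ = (p : WittVector p k) • M0 := hVM1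
  · rw [← neg_pointwise_smul, ← map_map_eq_pointwise_smul PiSq]
    exact map_mono (map_le_iff_le_comap.2 Pi01)

lemma map_V_map_V_top (hsup : M0 ⊔ M1 = ⊤) (hVM0 : M0.map Vr = M1)
    (hVM1 : M1.map Vr = (p : WittVector p k) • M0) :
    ((⊤ : Submodule (WittVector p k) M).map Vr).map Vr = (p : WittVector p k) • ⊤ := by
  rw [← hsup, Submodule.map_sup, Submodule.map_sup, hVM0, hVM1,
    map_pointwise_smulₛₗ _ (map_natCast _ p), hVM0, ← smul_sup']

end Dieudonne

theorem lie_type_two_zero_superspecial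
    (M : Type) [AddCommGroup M] [Module (WittVector p k) M]
    (M0 M1 : Submodule (WittVector p k) M) (compl : IsCompl M0 M1)
    (free0 : Nonempty (Module.Basis (Fin 2) (WittVector p k) ↥M0))
    (free1 : Nonempty (Module.Basis (Fin 2) (WittVector p k) ↥M1))
    (Fr : M →ₛₗ[sigW p k] M) (Vr : M →ₛₗ[sigWinv p k] M)
    (Fr01 : ∀ x ∈ M0, Fr x ∈ M1)
    (Vr10 : ∀ x ∈ M1, Vr x ∈ M0)
    (FV : ∀ x : M, Fr (Vr x) = (p : WittVector p k) • x)
    (VF : ∀ x : M, Vr (Fr x) = (p : WittVector p k) • x)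
    (Pi : M →ₗ[WittVector p k] M)
    (Pi01 : ∀ x ∈ M0, Pi x ∈ M1)
    (PiSq : ∀ x : M, Pi (Pi x) = -((p : WittVector p k) • x))
    (FrPi : ∀ x : M, Fr (Pi x) = Pi (Fr x))
    -- Lie type (2,0): `dim_k M⁰/V(M¹) = 2` …
    (hdim2 :
      (∃ x y : M, x ∈ M0 ∧ y ∈ M0 ∧ ∀ z ∈ M0,
          z ∈ Submodule.span (WittVector p k) (⇑Vr '' (M1 : Set M)) ⊔
            Submodule.span (WittVector p k) {x, y}) ∧
      ¬ ∃ x : M, x ∈ M0 ∧ ∀ z ∈ M0,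
          z ∈ Submodule.span (WittVector p k) (⇑Vr '' (M1 : Set M)) ⊔
            Submodule.span (WittVector p k) {x})
    -- … and `V(M⁰) = M¹`:
    (hVM0 : ⇑Vr '' (M0 : Set M) = (M1 : Set M)) :
    -- V(M¹) = p·M⁰
    (⇑Vr '' (M1 : Set M) = (fun x : M => (p : WittVector p k) • x) '' (M0 : Set M)) ∧
    -- F(M⁰) = M¹ and F(M¹) = p·M⁰
    (⇑Fr '' (M0 : Set M) = (M1 : Set M)) ∧
    (⇑Fr '' (M1 : Set M) = (fun x : M => (p : WittVector p k) • x) '' (M0 : Set M)) ∧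
    -- Π(M⁰) = M¹ and Π(M¹) = p·M⁰
    (⇑Pi '' (M0 : Set M) = (M1 : Set M)) ∧
    (⇑Pi '' (M1 : Set M) = (fun x : M => (p : WittVector p k) • x) '' (M0 : Set M)) ∧
    -- F(M) + V(M) = M¹ + p·M⁰, so M/(F,V)M is concentrated in the summand 0 …
    (Submodule.span (WittVector p k) (⇑Fr '' Set.univ ∪ ⇑Vr '' Set.univ) =
      M1 ⊔ (p : WittVector p k) • M0) ∧
    -- … and has k-dimension 2:
    ((∃ x y : M, x ∈ M0 ∧ y ∈ M0 ∧
        Submodule.span (WittVector p k) (⇑Fr '' Set.univ ∪ ⇑Vr '' Set.univ) ⊔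
          Submodule.span (WittVector p k) {x, y} = ⊤) ∧
      ¬ ∃ x : M,
        Submodule.span (WittVector p k) (⇑Fr '' Set.univ ∪ ⇑Vr '' Set.univ) ⊔
          Submodule.span (WittVector p k) {x} = ⊤) ∧
    -- V²(M) = p·M, i.e. M is superspecial:
    ((fun x : M => Vr (Vr x)) '' Set.univ =
      (fun x : M => (p : WittVector p k) • x) '' Set.univ) := by
  obtain ⟨b0⟩ := free0
  obtain ⟨b1⟩ := free1
  have := Module.Free.of_basis ((b0.prod b1).map (M0.prodEquivOfIsCompl M1 compl))
  have hp : (p : WittVector p k) ≠ 0 := (WittVector.irreducible p).ne_zero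
  have PiSq' : ∀ x, Pi (Pi x) = (-p : WittVector p k) • x :=
    fun x ↦ (PiSq x).trans (neg_smul ..).symm
  have hVM0' : M0.map Vr = M1 := SetLike.coe_injective (by rw [Submodule.map_coe, hVM0])
  have hVM1 := map_V_eq_p_smul b0 Fr01 Vr10 VF fun x hx hle ↦ hdim2.2 ⟨x, hx, fun z hz ↦ hle hz⟩
  have hFM0 :=
    Submodule.map_eq_of_map_eq_pointwise_smul (injective_of_comp_eq_smul hp FV) VF Fr01 hVM1
  have hFM1 : M1.map Fr = (p : WittVector p k) • M0 :=
    hVM0' ▸ Submodule.map_map_eq_pointwise_smul FV M0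
  have hPiM1 := map_Pi_eq_p_smul (injective_of_comp_eq_smul hp VF) FV FrPi PiSq' Pi01 hVM0' hVM1
  have hPiM0 := Submodule.map_eq_of_map_eq_pointwise_smul
    (injective_of_comp_eq_smul (neg_ne_zero.2 hp) PiSq') PiSq' Pi01
    (by rw [Submodule.neg_pointwise_smul, hPiM1])
  have hspan : Submodule.span (WittVector p k) (⇑Fr '' Set.univ ∪ ⇑Vr '' Set.univ) =
      M1 ⊔ (p : WittVector p k) • M0 := by
    rw [← Submodule.top_coe (R := WittVector p k), ← Submodule.map_coe, ← Submodule.map_coe,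
      Submodule.span_union, Submodule.span_eq, Submodule.span_eq, ← compl.sup_eq_top,
      Submodule.map_sup, Submodule.map_sup, hFM0, hFM1, hVM0', hVM1, sup_idem]
  refine ⟨Submodule.image_eq_image_smul_of_map_eq hVM1, by rw [← Submodule.map_coe, hFM0],
    Submodule.image_eq_image_smul_of_map_eq hFM1, by rw [← Submodule.map_coe, hPiM0],
    Submodule.image_eq_image_smul_of_map_eq hPiM1, hspan,
    ⟨⟨b0 0, b0 1, (b0 0).2, (b0 1).2, ?_⟩, fun ⟨x, hx⟩ ↦ ?_⟩, ?_⟩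
  · rw [hspan, b0.span_coe_pair, eq_top_iff, ← compl.sup_eq_top]
    exact sup_le le_sup_right (le_sup_left.trans le_sup_left)
  · exact Submodule.not_le_sup_pointwise_smul_sup_span_singleton
      WittVector.natCast_p_mem_jacobson_bot b0 compl.disjoint x (hspan ▸ hx ▸ le_top)
  · rw [← Set.image_image, ← Submodule.top_coe (R := WittVector p k)]
    exact Submodule.image_eq_image_smul_of_map_eq (map_V_map_V_top compl.sup_eq_top hVM0' hVM1)
end
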